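/- arXiv:0712.3588 — 4 statements merged into one kernel-verified Lean document; each statement's English description precedes it below -/
import Mathlib

section
/- For ν > 0, λ ∈ (0,1), and θ ≥ 0, one has the identity (ν+θ) ∫₀¹ x^{ν+θ+λ-1} (1-x)^{-λ} dx = Γ(ν+λ)Γ(1-λ)/Γ(ν) + λ ∫₀^∞ (1 - e^{-θx}) e^{x(1-ν)} (e^x - 1)^{-λ-1} dx. -/
/-!
Substituting `u = exp (-x)` turns the Lévy integral into
`∫₀¹ (1 - u^θ) u^(ν+λ-1) (1-u)^(-λ-1) du`, and `Γ(ν+λ)Γ(1-λ)/Γ(ν) = ν B(ν+λ, 1-λ)`.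
The identity is then an integration by parts: the function
`H u = u^(ν+λ) (u^θ - 1) (1-u)^(-λ)` has derivative
`(ν+θ) u^(ν+θ+λ-1) (1-u)^(-λ) - ν u^(ν+λ-1) (1-u)^(-λ) - λ (1-u^θ) u^(ν+λ-1) (1-u)^(-λ-1)`
and vanishes at both ends of `(0, 1)`; at `1` because `1 - u^θ ≤ (1+θ)(1-u)` and `λ < 1`.
-/

open Real MeasureTheory Set Filter Topology

lemma ofReal_rpow_mul_one_sub_rpow {x : ℝ} (hx : x ∈ Icc (0 : ℝ) 1) (a b : ℝ) :
    ((x ^ a * (1 - x) ^ b : ℝ) : ℂ) = (x : ℂ) ^ (a : ℂ) * (1 - (x : ℂ)) ^ (b : ℂ) := by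
  rw [Complex.ofReal_mul, Complex.ofReal_cpow hx.1, Complex.ofReal_cpow (sub_nonneg.2 hx.2)]
  push_cast
  rfl

lemma Complex.betaIntegral_ofReal (p q : ℝ) :
    Complex.betaIntegral p q = ↑(∫ x in Ioo (0 : ℝ) 1, x ^ (p - 1) * (1 - x) ^ (q - 1)) := by
  rw [← integral_Ioc_eq_integral_Ioo, ← intervalIntegral.integral_of_le zero_le_one,
    ← intervalIntegral.integral_ofReal, Complex.betaIntegral]
  refine intervalIntegral.integral_congr fun x hx => ?_
  rw [uIcc_of_le zero_le_one] at hx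
  simp only [ofReal_rpow_mul_one_sub_rpow hx]
  push_cast
  rfl

lemma integrableOn_rpow_mul_one_sub_rpow {a b : ℝ} (ha : -1 < a) (hb : -1 < b) :
    IntegrableOn (fun x : ℝ => x ^ a * (1 - x) ^ b) (Ioo 0 1) := by
  have h := Complex.betaIntegral_convergent (u := (a + 1 : ℝ)) (v := (b + 1 : ℝ))
    (by simp; linarith) (by simp; linarith)
  rw [intervalIntegrable_iff_integrableOn_Ioc_of_le zero_le_one] at h
  refine IntegrableOn.congr_fun (h.mono_set Ioo_subset_Ioc_self).re (fun x hx => ?_)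
    measurableSet_Ioo
  simp only [Complex.ofReal_add, Complex.ofReal_one, add_sub_cancel_right]
  rw [← ofReal_rpow_mul_one_sub_rpow (Ioo_subset_Icc_self hx), RCLike.re_to_complex,
    Complex.ofReal_re]

lemma Gamma_mul_Gamma_eq_Gamma_add_mul_integral {p q : ℝ} (hp : 0 < p) (hq : 0 < q) :
    Gamma p * Gamma q
      = Gamma (p + q) * ∫ x in Ioo (0 : ℝ) 1, x ^ (p - 1) * (1 - x) ^ (q - 1) := by
  have h := Complex.Gamma_mul_Gamma_eq_betaIntegral (s := p) (t := q)
    (by simpa using hp) (by simpa using hq)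
  rw [Complex.betaIntegral_ofReal, ← Complex.ofReal_add] at h
  simp only [Complex.Gamma_ofReal] at h
  exact_mod_cast h

lemma image_exp_neg_Ioi_zero : (fun x : ℝ => exp (-x)) '' Ioi 0 = Ioo 0 1 := by
  rw [show (fun x : ℝ => exp (-x)) = exp ∘ Neg.neg from rfl, image_comp, image_neg_Ioi, neg_zero,
    image_exp_Iio, exp_zero]

lemma integral_comp_exp_neg_Ioi {E : Type*} [NormedAddCommGroup E] [NormedSpace ℝ E]
    (g : ℝ → E) : ∫ x in Ioi 0, exp (-x) • g (exp (-x)) = ∫ u in Ioo 0 1, g u := by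
  rw [← image_exp_neg_Ioi_zero, integral_image_eq_integral_abs_deriv_smul measurableSet_Ioi
    (fun x _ => (hasDerivAt_neg' x).exp.hasDerivWithinAt)
    (fun x _ y _ h => neg_injective (exp_injective h))]
  simp [abs_of_pos (exp_pos _)]

lemma levy_integral_eq_integral_Ioo (ν lam θ : ℝ) :
    ∫ x in Ioi (0 : ℝ), (1 - exp (-θ * x)) * exp (x * (1 - ν)) * (exp x - 1) ^ (-lam - 1)
      = ∫ u in Ioo (0 : ℝ) 1, (1 - u ^ θ) * u ^ (ν + lam - 1) * (1 - u) ^ (-lam - 1) := by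
  rw [← integral_comp_exp_neg_Ioi]
  refine setIntegral_congr_fun measurableSet_Ioi fun x (hx : 0 < x) => ?_
  have hexp : exp x - 1 = exp x * (1 - exp (-x)) := by
    rw [mul_sub, ← exp_add, add_neg_cancel, exp_zero, mul_one]
  have hpow : (exp x - 1) ^ (-lam - 1) = exp (x * (-lam - 1)) * (1 - exp (-x)) ^ (-lam - 1) := by
    rw [hexp, mul_rpow (exp_pos x).le (by simpa using hx.le), exp_mul]
  rw [smul_eq_mul, ← exp_mul, ← exp_mul, hpow]
  calc _ = (1 - exp (-θ * x)) * (1 - exp (-x)) ^ (-lam - 1)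
          * exp (x * (1 - ν) + x * (-lam - 1)) := by
        rw [exp_add]; ring
    _ = (1 - exp (-x * θ)) * (1 - exp (-x)) ^ (-lam - 1) * exp (-x + -x * (ν + lam - 1)) := by
        ring_nf
    _ = _ := by rw [exp_add]; ring

lemma one_sub_rpow_le_mul_one_sub {u θ : ℝ} (hu0 : 0 < u) (hu1 : u ≤ 1) (hθ : 0 ≤ θ) :
    1 - u ^ θ ≤ (1 + θ) * (1 - u) := by
  rcases le_total θ 1 with h | h
  · have : u ≤ u ^ θ := by simpa using rpow_le_rpow_of_exponent_ge hu0 hu1 h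
    nlinarith
  · have bernoulli := one_add_mul_self_le_rpow_one_add (s := u - 1) (by linarith) h
    rw [add_sub_cancel] at bernoulli
    nlinarith

lemma integrableOn_one_sub_rpow_mul_rpow_mul_one_sub_rpow {θ a b : ℝ} (hθ : 0 ≤ θ)
    (ha : -1 < a) (hb : -2 < b) :
    IntegrableOn (fun u : ℝ => (1 - u ^ θ) * u ^ a * (1 - u) ^ b) (Ioo 0 1) := by
  refine Integrable.mono'
    ((integrableOn_rpow_mul_one_sub_rpow ha (by linarith : -1 < b + 1)).const_mul (1 + θ))
    (by fun_prop : Measurable fun u : ℝ => (1 - u ^ θ) * u ^ a * (1 - u) ^ b).aestronglyMeasurable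
    ((ae_restrict_iff' measurableSet_Ioo).2 (ae_of_all _ fun u ⟨hu0, hu1⟩ => ?_))
  have h1u : 0 < 1 - u := sub_pos.2 hu1
  have hθu : 0 ≤ 1 - u ^ θ := sub_nonneg.2 (rpow_le_one hu0.le hu1.le hθ)
  rw [Real.norm_of_nonneg (by positivity), rpow_add_one h1u.ne']
  calc (1 - u ^ θ) * u ^ a * (1 - u) ^ b
      ≤ (1 + θ) * (1 - u) * u ^ a * (1 - u) ^ b := by
        gcongr; exact one_sub_rpow_le_mul_one_sub hu0 hu1.le hθ
    _ = (1 + θ) * (u ^ a * ((1 - u) ^ b * (1 - u))) := by ring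

noncomputable def levyPrimitive (ν lam θ u : ℝ) : ℝ :=
  u ^ (ν + lam) * (u ^ θ - 1) * (1 - u) ^ (-lam)

section Primitive

variable {ν lam θ : ℝ}

lemma hasDerivAt_levyPrimitive {u : ℝ} (hu : u ∈ Ioo (0 : ℝ) 1) :
    HasDerivAt (levyPrimitive ν lam θ)
      ((ν + θ) * (u ^ (ν + θ + lam - 1) * (1 - u) ^ (-lam))
        - ν * (u ^ (ν + lam - 1) * (1 - u) ^ (-lam))
        - lam * ((1 - u ^ θ) * u ^ (ν + lam - 1) * (1 - u) ^ (-lam - 1))) u := by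
  obtain ⟨hu0, hu1⟩ := hu
  have h1u : 0 < 1 - u := sub_pos.2 hu1
  have hd := (((hasDerivAt_rpow_const (p := ν + lam) (Or.inl hu0.ne')).mul
    ((hasDerivAt_rpow_const (p := θ) (Or.inl hu0.ne')).sub_const 1)).mul
    ((hasDerivAt_rpow_const (p := -lam) (Or.inl h1u.ne')).comp u
      ((hasDerivAt_id u).const_sub 1)))
  refine hd.congr_deriv ?_
  have e1 : u ^ (ν + θ + lam - 1) = u ^ θ * u ^ (ν + lam - 1) := by
    rw [← rpow_add hu0]; ring_nf
  have e2 : u ^ (ν + lam) = u ^ (ν + lam - 1) * u := by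
    rw [← rpow_add_one hu0.ne', sub_add_cancel]
  have e3 : u ^ (θ - 1) = u ^ θ / u := rpow_sub_one hu0.ne' θ
  have e4 : (1 - u) ^ (-lam) = (1 - u) ^ (-lam - 1) * (1 - u) := by
    rw [← rpow_add_one h1u.ne', sub_add_cancel]
  simp only [Pi.mul_apply, Function.comp_apply]
  rw [e1, e2, e3, e4]
  field_simp
  ring

lemma tendsto_levyPrimitive_nhdsGT_zero (hνlam : 0 < ν + lam) (hθ : 0 ≤ θ) :
    Tendsto (levyPrimitive ν lam θ) (𝓝[>] 0) (𝓝 0) := by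
  have hcont : ContinuousAt (levyPrimitive ν lam θ) 0 :=
    ((continuousAt_id.rpow_const (Or.inr hνlam.le)).mul
      ((continuousAt_id.rpow_const (Or.inr hθ)).sub continuousAt_const)).mul
      ((continuousAt_const.sub continuousAt_id).rpow_const (Or.inl (by norm_num)))
  simpa [levyPrimitive, zero_rpow hνlam.ne'] using hcont.tendsto.mono_left nhdsWithin_le_nhds

lemma tendsto_levyPrimitive_nhdsLT_one (hlam : lam < 1) (hθ : 0 ≤ θ) :
    Tendsto (levyPrimitive ν lam θ) (𝓝[<] 1) (𝓝 0) := by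
  have hpow : Tendsto (fun u : ℝ => u ^ (ν + lam)) (𝓝[<] 1) (𝓝 1) := by
    simpa using (continuousAt_id.rpow_const (p := ν + lam) (Or.inl one_ne_zero)).tendsto.mono_left
      nhdsWithin_le_nhds
  have hbound : Tendsto (fun u : ℝ => (1 + θ) * (1 - u) ^ (1 - lam)) (𝓝[<] 1) (𝓝 0) := by
    have hc : ContinuousAt (fun u : ℝ => (1 + θ) * (1 - u) ^ (1 - lam)) 1 :=
      ((continuousAt_const.sub continuousAt_id).rpow_const (Or.inr (by linarith))).const_mul _
    simpa [zero_rpow (by linarith : 1 - lam ≠ 0)] using hc.tendsto.mono_left nhdsWithin_le_nhds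
  have hrest : Tendsto (fun u : ℝ => (u ^ θ - 1) * (1 - u) ^ (-lam)) (𝓝[<] 1) (𝓝 0) := by
    refine squeeze_zero_norm' ?_ hbound
    filter_upwards [Ioo_mem_nhdsLT zero_lt_one] with u ⟨hu0, hu1⟩
    have h1u : 0 < 1 - u := sub_pos.2 hu1
    rw [norm_mul, norm_sub_rev, Real.norm_of_nonneg (sub_nonneg.2 (rpow_le_one hu0.le hu1.le hθ)),
      Real.norm_of_nonneg (by positivity), show 1 - lam = -lam + 1 by ring,
      rpow_add_one h1u.ne', mul_comm _ (1 - u), ← mul_assoc]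
    gcongr
    exact one_sub_rpow_le_mul_one_sub hu0 hu1.le hθ
  rw [← mul_zero 1]
  exact (hpow.mul hrest).congr fun u => (mul_assoc _ _ _).symm

end Primitive

lemma mul_integral_rpow_mul_one_sub_rpow_eq {ν lam θ : ℝ} (hνlam : 0 < ν + lam) (hlam : lam < 1)
    (hθ : 0 ≤ θ) :
    (ν + θ) * ∫ u in Ioo (0 : ℝ) 1, u ^ (ν + θ + lam - 1) * (1 - u) ^ (-lam)
      = ν * (∫ u in Ioo (0 : ℝ) 1, u ^ (ν + lam - 1) * (1 - u) ^ (-lam))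
        + lam * ∫ u in Ioo (0 : ℝ) 1, (1 - u ^ θ) * u ^ (ν + lam - 1) * (1 - u) ^ (-lam - 1) := by
  have hAθ := integrableOn_rpow_mul_one_sub_rpow (a := ν + θ + lam - 1) (b := -lam)
    (by linarith) (by linarith)
  have hA := integrableOn_rpow_mul_one_sub_rpow (a := ν + lam - 1) (b := -lam)
    (by linarith) (by linarith)
  have hC := integrableOn_one_sub_rpow_mul_rpow_mul_one_sub_rpow (a := ν + lam - 1)
    (b := -lam - 1) hθ (by linarith) (by linarith)
  have ftc := intervalIntegral.integral_eq_sub_of_hasDerivAt_of_tendsto zero_lt_one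
    (fun u hu => hasDerivAt_levyPrimitive hu)
    ((intervalIntegrable_iff_integrableOn_Ioo_of_le zero_le_one).2
      (((hAθ.const_mul _).sub (hA.const_mul _)).sub (hC.const_mul _)))
    (tendsto_levyPrimitive_nhdsGT_zero hνlam hθ) (tendsto_levyPrimitive_nhdsLT_one hlam hθ)
  rw [intervalIntegral.integral_of_le zero_le_one, integral_Ioc_eq_integral_Ioo, sub_zero,
    integral_sub, integral_sub, integral_const_mul, integral_const_mul, integral_const_mul] at ftc
  · linarith
  exacts [hAθ.const_mul _, hA.const_mul _, (hAθ.const_mul _).sub (hA.const_mul _), hC.const_mul _]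

theorem beta_integral_levy_decomposition
    (ν lam θ : ℝ) (hν : 0 < ν) (hlam : 0 < lam ∧ lam < 1) (hθ : 0 ≤ θ) :
    (ν + θ) * ∫ x in Set.Ioo (0 : ℝ) 1, x ^ (ν + θ + lam - 1) * (1 - x) ^ (-lam)
      = Real.Gamma (ν + lam) * Real.Gamma (1 - lam) / Real.Gamma ν
        + lam * ∫ x in Set.Ioi (0 : ℝ),
            (1 - Real.exp (-θ * x)) * Real.exp (x * (1 - ν)) *
              (Real.exp x - 1) ^ (-lam - 1) := by
  have hbeta := Gamma_mul_Gamma_eq_Gamma_add_mul_integral (p := ν + lam) (q := 1 - lam)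
    (by linarith [hlam.1]) (by linarith [hlam.2])
  rw [add_add_sub_cancel, Gamma_add_one hν.ne', sub_sub_cancel_left] at hbeta
  rw [levy_integral_eq_integral_Ioo, hbeta, mul_comm ν, mul_assoc,
    mul_div_cancel_left₀ _ (Gamma_pos_of_pos hν).ne']
  exact mul_integral_rpow_mul_one_sub_rpow_eq (by linarith [hlam.1]) hlam.2 hθ
end

section
/- For λ ∈ (0,1), the functions W(x) = (1/Γ(1-λ)) ∫₀ˣ (e^y - 1)^{-λ} dy and W*(x) = (1/Γ(λ)) ∫₀ˣ (1 - e^{-z})^{λ-1} dz satisfy the convolution identity ∫₀ˣ W'(y) W*'(x-y) dy = 1 for all x > 0, i.e. dW * dW* = dx. -/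
/-!
The substitution `y = x - log (1 + (eˣ - 1) u)`, i.e. `u = (e^(x-y) - 1) / (eˣ - 1)`, maps `(0, 1)`
onto `(0, x)`. With `q = (eˣ - 1) / (1 + (eˣ - 1) u)`, the absolute value of its Jacobian, it turns
`e^y - 1` into `q (1 - u)` and `1 - e^(-(x-y))` into `q u`. The exponents `-λ` and `λ - 1` add up
to `-1`, so the powers of `q` cancel the Jacobian and what is left is the Beta integral
`B(λ, 1 - λ) = Γ(λ) Γ(1 - λ)`.
-/

open Real MeasureTheory Set

theorem integral_rpow_mul_one_sub_rpow_eq_beta {a b : ℝ} (ha : 0 < a) (hb : 0 < b) :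
    ∫ u in (0 : ℝ)..1, u ^ (a - 1) * (1 - u) ^ (b - 1) = ProbabilityTheory.beta a b := by
  have h : Complex.betaIntegral a b =
      ↑(∫ u in (0 : ℝ)..1, u ^ (a - 1) * (1 - u) ^ (b - 1)) := by
    rw [Complex.betaIntegral, ← intervalIntegral.integral_ofReal]
    refine intervalIntegral.integral_congr fun u hu ↦ ?_
    rw [uIcc_of_le zero_le_one] at hu
    rw [Complex.ofReal_mul, Complex.ofReal_cpow hu.1, Complex.ofReal_cpow (sub_nonneg.2 hu.2)]
    push_cast
    rfl
  rw [ProbabilityTheory.beta_eq_betaIntegralReal a b ha hb, h, Complex.ofReal_re]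

lemma mul_mul_rpow_mul_rpow_eq {q A B p r : ℝ} (hq : 0 < q) (hA : 0 ≤ A) (hB : 0 ≤ B)
    (hpr : p + r = -1) : q * ((q * A) ^ p * (q * B) ^ r) = A ^ p * B ^ r := by
  have hq_pow : q * (q ^ p * q ^ r) = 1 := by
    rw [← rpow_add hq, hpr, rpow_neg_one, mul_inv_cancel₀ hq.ne']
  rw [mul_rpow hq.le hA, mul_rpow hq.le hB]
  linear_combination (A ^ p * B ^ r) * hq_pow

noncomputable def betaSubstitution (x u : ℝ) : ℝ := x - log (1 + (exp x - 1) * u)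

section BetaSubstitution

variable {x u : ℝ}

lemma exp_sub_one_pos (hx : 0 < x) : 0 < exp x - 1 :=
  sub_pos.2 (one_lt_exp_iff.2 hx)

lemma one_add_exp_sub_one_mul_pos (hx : 0 < x) (hu : 0 < u) : 0 < 1 + (exp x - 1) * u := by
  have := exp_sub_one_pos hx
  positivity

lemma betaSubstitution_image_Ioo (hx : 0 < x) : betaSubstitution x '' Ioo 0 1 = Ioo 0 x := by
  have hc := exp_sub_one_pos hx
  have hcomp : betaSubstitution x = (x - ·) ∘ log ∘ ((exp x - 1) * · + 1) := by
    ext u; simp [betaSubstitution, add_comm]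
  rw [hcomp, image_comp, image_comp, image_affine_Ioo hc, image_log_Ioo (by norm_num) (by linarith),
    image_const_sub_Ioo]
  simp

lemma betaSubstitution_injOn (hx : 0 < x) : InjOn (betaSubstitution x) (Ioo 0 1) := by
  intro u hu v hv h
  have hc := exp_sub_one_pos hx
  have hlog := log_injOn_pos (one_add_exp_sub_one_mul_pos hx hu.1)
    (one_add_exp_sub_one_mul_pos hx hv.1) (sub_right_injective h)
  exact mul_left_cancel₀ hc.ne' (add_left_cancel hlog)

lemma hasDerivAt_betaSubstitution (hu : 0 < 1 + (exp x - 1) * u) :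
    HasDerivAt (betaSubstitution x) (-((exp x - 1) / (1 + (exp x - 1) * u))) u := by
  have hlog := (((hasDerivAt_id u).const_mul (exp x - 1)).const_add 1).log hu.ne'
  show HasDerivAt (fun u ↦ x - log (1 + (exp x - 1) * u)) _ u
  simpa using hlog.const_sub x

lemma exp_betaSubstitution_sub_one (hu : 0 < 1 + (exp x - 1) * u) :
    exp (betaSubstitution x u) - 1 = (exp x - 1) / (1 + (exp x - 1) * u) * (1 - u) := by
  rw [betaSubstitution, exp_sub, exp_log hu]
  field_simp
  ring

lemma one_sub_exp_neg_sub_betaSubstitution (hu : 0 < 1 + (exp x - 1) * u) :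
    1 - exp (-(x - betaSubstitution x u)) = (exp x - 1) / (1 + (exp x - 1) * u) * u := by
  rw [betaSubstitution, sub_sub_cancel, exp_neg, exp_log hu]
  field_simp
  ring

end BetaSubstitution

theorem integral_exp_sub_one_rpow_mul_one_sub_exp_neg_rpow_eq_beta {lam x : ℝ} (h0 : 0 < lam)
    (h1 : lam < 1) (hx : 0 < x) :
    ∫ y in (0 : ℝ)..x, (exp y - 1) ^ (-lam) * (1 - exp (-(x - y))) ^ (lam - 1) =
      ProbabilityTheory.beta lam (1 - lam) := by
  have hc := exp_sub_one_pos hx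
  have hD : ∀ u ∈ Ioo (0 : ℝ) 1, 0 < 1 + (exp x - 1) * u :=
    fun u hu ↦ one_add_exp_sub_one_mul_pos hx hu.1
  have hchange := integral_image_eq_integral_abs_deriv_smul measurableSet_Ioo
    (fun u hu ↦ (hasDerivAt_betaSubstitution (hD u hu)).hasDerivWithinAt)
    (betaSubstitution_injOn hx)
    (fun y ↦ (exp y - 1) ^ (-lam) * (1 - exp (-(x - y))) ^ (lam - 1))
  rw [betaSubstitution_image_Ioo hx] at hchange
  have hBeta := integral_rpow_mul_one_sub_rpow_eq_beta h0 (sub_pos.2 h1)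
  rw [sub_sub_cancel_left] at hBeta
  rw [intervalIntegral.integral_of_le hx.le, integral_Ioc_eq_integral_Ioo, hchange, ← hBeta,
    intervalIntegral.integral_of_le zero_le_one, integral_Ioc_eq_integral_Ioo]
  refine setIntegral_congr_fun measurableSet_Ioo fun u hu ↦ ?_
  have hq : 0 < (exp x - 1) / (1 + (exp x - 1) * u) := div_pos hc (hD u hu)
  rw [smul_eq_mul, abs_neg, abs_of_pos hq, exp_betaSubstitution_sub_one (hD u hu),
    one_sub_exp_neg_sub_betaSubstitution (hD u hu), mul_comm (u ^ _)]
  exact mul_mul_rpow_mul_rpow_eq hq (sub_nonneg.2 hu.2.le) hu.1.le (by ring)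

theorem conjugate_scale_functions_convolution_identity
    (lam : ℝ) (hlam : 0 < lam ∧ lam < 1) :
    ∀ x : ℝ, 0 < x →
      (∫ y in (0 : ℝ)..x,
        ((Real.exp y - 1) ^ (-lam) / Real.Gamma (1 - lam)) *
          ((1 - Real.exp (-(x - y))) ^ (lam - 1) / Real.Gamma lam)) = 1 := by
  intro x hx
  have hΓ : Gamma (1 - lam) * Gamma lam ≠ 0 :=
    (mul_pos (Gamma_pos_of_pos (sub_pos.2 hlam.2)) (Gamma_pos_of_pos hlam.1)).ne'
  simp only [div_mul_div_comm]
  rw [intervalIntegral.integral_div,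
    integral_exp_sub_one_rpow_mul_one_sub_exp_neg_rpow_eq_beta hlam.1 hlam.2 hx,
    ProbabilityTheory.beta, add_sub_cancel, Gamma_one, div_one, mul_comm, div_self hΓ]
end

section
/- For θ > 0, ∫₀^∞ e^{-θx} e^{-x} (∫₀^∞ x^{t-1}/Γ(t) dt) dx = 1/log(1+θ). -/
open Real MeasureTheory Set

private lemma gamma_contOn : ContinuousOn Real.Gamma (Set.Ioi 0) := by
  intro t ht
  have ht' : (0:ℝ) < t := ht
  refine (Real.differentiableAt_Gamma (fun m => ?_)).continuousAt.continuousWithinAt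
  have : (0:ℝ) ≤ (m:ℝ) := Nat.cast_nonneg m
  intro h; rw [h] at ht'; linarith

private lemma aux_integrable {c t : ℝ} (hc : 0 < c) (ht : 0 < t) :
    IntegrableOn (fun x : ℝ => Real.exp (-(c*x)) * (x ^ (t-1) / Real.Gamma t)) (Set.Ioi 0) := by
  have base : IntegrableOn (fun x : ℝ => x ^ (t-1) * Real.exp (-c * x ^ (1:ℝ)))
      (Set.Ioi 0) := integrableOn_rpow_mul_exp_neg_mul_rpow (by linarith) one_pos hc
  have base2 : IntegrableOn (fun x : ℝ => x ^ (t-1) * Real.exp (-(c * x))) (Set.Ioi 0) := by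
    simpa [Real.rpow_one, neg_mul] using base
  have heq : (fun x : ℝ => Real.exp (-(c*x)) * (x ^ (t-1) / Real.Gamma t))
      = fun x : ℝ => (Real.Gamma t)⁻¹ * (x ^ (t-1) * Real.exp (-(c*x))) := by
    funext x; ring
  rw [IntegrableOn, heq]
  exact base2.const_mul _

private lemma aux_value {c t : ℝ} (hc : 0 < c) (ht : 0 < t) :
    ∫ x in Set.Ioi (0:ℝ), Real.exp (-(c*x)) * (x ^ (t-1) / Real.Gamma t)
      = Real.exp (-(Real.log c * t)) := by
  have heq : (fun x : ℝ => Real.exp (-(c*x)) * (x ^ (t-1) / Real.Gamma t))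
      = fun x : ℝ => (Real.Gamma t)⁻¹ * (x ^ (t-1) * Real.exp (-(c*x))) := by
    funext x; ring
  rw [heq, integral_const_mul, Real.integral_rpow_mul_exp_neg_mul_Ioi ht hc]
  have hΓ : Real.Gamma t ≠ 0 := (Real.Gamma_pos_of_pos ht).ne'
  have h1 : (Real.Gamma t)⁻¹ * ((1/c) ^ t * Real.Gamma t) = (1/c) ^ t := by
    field_simp
  rw [h1, Real.rpow_def_of_pos (by positivity : (0:ℝ) < 1/c), one_div, Real.log_inv, neg_mul]

private lemma exp_value {L : ℝ} (hL : 0 < L) :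
    ∫ t in Set.Ioi (0:ℝ), Real.exp (-(L*t)) = 1 / L := by
  have := Real.integral_rpow_mul_exp_neg_mul_Ioi one_pos hL
  simpa [Real.rpow_one, Real.Gamma_one] using this

theorem gamma_subordinator_potential_density_laplace
    (θ : ℝ) (hθ : 0 < θ) :
    ∫ x in Set.Ioi (0 : ℝ),
      Real.exp (-(1 + θ) * x) * ∫ t in Set.Ioi (0 : ℝ), x ^ (t - 1) / Real.Gamma t
      = 1 / Real.log (1 + θ) := by
  set c : ℝ := 1 + θ with hcdef
  have hc0 : 0 < c := by simp only [hcdef]; linarith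
  have hc1 : 1 < c := by simp only [hcdef]; linarith
  set L : ℝ := Real.log c with hLdef
  have hL : 0 < L := Real.log_pos hc1
  -- measurable version of Gamma on Ioi 0
  obtain ⟨g, hg, hgae⟩ : ∃ g : ℝ → ℝ, Measurable g ∧
      Real.Gamma =ᵐ[volume.restrict (Set.Ioi 0)] g := by
    have h := gamma_contOn.aemeasurable (μ := volume) measurableSet_Ioi
    exact ⟨h.mk _, h.measurable_mk, h.ae_eq_mk⟩
  have hmeas : Measurable (Function.uncurry fun x t : ℝ =>
      ENNReal.ofReal (Real.exp (-(c*x)) * (x ^ (t-1) / g t))) := by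
    apply ENNReal.measurable_ofReal.comp
    exact ((measurable_fst.const_mul c).neg.exp).mul
      ((measurable_fst.pow (measurable_snd.sub measurable_const)).div (hg.comp measurable_snd))
  -- the key lintegral computation
  have key : ∫⁻ x in Set.Ioi (0:ℝ), ∫⁻ t in Set.Ioi (0:ℝ),
      ENNReal.ofReal (Real.exp (-(c*x)) * (x ^ (t-1) / g t)) = ENNReal.ofReal (1 / L) := by
    rw [lintegral_lintegral_swap hmeas.aemeasurable]
    have h1 : ∫⁻ t in Set.Ioi (0:ℝ), ∫⁻ x in Set.Ioi (0:ℝ),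
        ENNReal.ofReal (Real.exp (-(c*x)) * (x ^ (t-1) / g t))
        = ∫⁻ t in Set.Ioi (0:ℝ), ENNReal.ofReal (Real.exp (-(L*t))) := by
      apply lintegral_congr_ae
      filter_upwards [hgae, self_mem_ae_restrict (measurableSet_Ioi (a := (0:ℝ)))] with t hgt ht
      rw [← hgt]
      rw [← ofReal_integral_eq_lintegral_ofReal (aux_integrable hc0 ht) ?_]
      · rw [aux_value hc0 ht]
      · filter_upwards [self_mem_ae_restrict (measurableSet_Ioi (a := (0:ℝ)))] with x hx
        exact mul_nonneg (Real.exp_nonneg _)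
          (div_nonneg (Real.rpow_nonneg (le_of_lt hx) _) (Real.Gamma_pos_of_pos ht).le)
    rw [h1, ← ofReal_integral_eq_lintegral_ofReal
      (by simpa [neg_mul, IntegrableOn] using exp_neg_integrableOn_Ioi 0 hL)
      (ae_of_all _ fun t => Real.exp_nonneg _), exp_value hL]
  -- Φ : the inner lintegral as a function of x
  set Φ : ℝ → ENNReal := fun x => ∫⁻ t in Set.Ioi (0:ℝ),
      ENNReal.ofReal (Real.exp (-(c*x)) * (x ^ (t-1) / g t)) with hΦdef
  have hΦmeas : Measurable Φ := hmeas.lintegral_prod_right'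
  have hΦfin : ∀ᵐ x ∂(volume.restrict (Set.Ioi 0)), Φ x < ⊤ :=
    ae_lt_top hΦmeas (by rw [key]; exact ENNReal.ofReal_ne_top)
  -- relate Φ to the Bochner integrand
  have hae : ∀ᵐ x ∂(volume.restrict (Set.Ioi 0)),
      ENNReal.ofReal (Real.exp (-(1 + θ) * x) *
        ∫ t in Set.Ioi (0:ℝ), x ^ (t - 1) / Real.Gamma t) = Φ x := by
    filter_upwards [hΦfin, self_mem_ae_restrict (measurableSet_Ioi (a := (0:ℝ)))] with x hfin hx
    have hx0 : (0:ℝ) < x := hx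
    have hexp : Real.exp (-(1 + θ) * x) = Real.exp (-(c*x)) := by
      rw [hcdef, neg_mul]
    -- inner Bochner integral in terms of lintegral with g
    have hnn : 0 ≤ᵐ[volume.restrict (Set.Ioi 0)] fun t => x ^ (t - 1) / g t := by
      filter_upwards [hgae, self_mem_ae_restrict (measurableSet_Ioi (a := (0:ℝ)))] with t hgt ht
      rw [← hgt]
      exact div_nonneg (Real.rpow_nonneg hx0.le _) (Real.Gamma_pos_of_pos ht).le
    have hsm : AEStronglyMeasurable (fun t => x ^ (t - 1) / g t)
        (volume.restrict (Set.Ioi 0)) := by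
      exact ((measurable_const.pow (measurable_id.sub measurable_const)).div hg).aestronglyMeasurable
    have hν : (∫ t in Set.Ioi (0:ℝ), x ^ (t - 1) / Real.Gamma t)
        = (∫⁻ t in Set.Ioi (0:ℝ), ENNReal.ofReal (x ^ (t - 1) / g t)).toReal := by
      rw [integral_congr_ae (g := fun t => x ^ (t-1) / g t)
        (by filter_upwards [hgae] with t hgt; rw [hgt])]
      exact integral_eq_lintegral_of_nonneg_ae hnn hsm
    -- Φ x = ofReal(exp) * G' x
    have hΦx : Φ x = ENNReal.ofReal (Real.exp (-(c*x))) *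
        ∫⁻ t in Set.Ioi (0:ℝ), ENNReal.ofReal (x ^ (t - 1) / g t) := by
      rw [hΦdef]
      simp only
      rw [← lintegral_const_mul' _ _ ENNReal.ofReal_ne_top]
      apply lintegral_congr_ae
      filter_upwards [] with t
      rw [← ENNReal.ofReal_mul (Real.exp_nonneg _)]
    have hG'fin : (∫⁻ t in Set.Ioi (0:ℝ), ENNReal.ofReal (x ^ (t - 1) / g t)) ≠ ⊤ := by
      intro htop
      rw [hΦx, htop, ENNReal.mul_top (by
        simp [ENNReal.ofReal_eq_zero, not_le, Real.exp_pos])] at hfin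
      exact (lt_irrefl _ hfin)
    rw [hν, hexp, ENNReal.ofReal_mul (Real.exp_nonneg _), ENNReal.ofReal_toReal hG'fin, hΦx]
  -- conclude
  have hnonneg : 0 ≤ᵐ[volume.restrict (Set.Ioi 0)] fun x =>
      Real.exp (-(1 + θ) * x) * ∫ t in Set.Ioi (0:ℝ), x ^ (t - 1) / Real.Gamma t := by
    filter_upwards [self_mem_ae_restrict (measurableSet_Ioi (a := (0:ℝ)))] with x hx
    have hx0 : (0:ℝ) < x := hx
    refine mul_nonneg (Real.exp_nonneg _) (setIntegral_nonneg measurableSet_Ioi fun t ht => ?_)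
    exact div_nonneg (Real.rpow_nonneg hx0.le _) (Real.Gamma_nonneg_of_nonneg (le_of_lt ht))
  have hsm : AEStronglyMeasurable (fun x =>
      Real.exp (-(1 + θ) * x) * ∫ t in Set.Ioi (0:ℝ), x ^ (t - 1) / Real.Gamma t)
      (volume.restrict (Set.Ioi 0)) := by
    refine (hΦmeas.ennreal_toReal.aestronglyMeasurable).congr ?_
    filter_upwards [hae, hnonneg] with x hx hnx
    rw [← hx, ENNReal.toReal_ofReal hnx]
  rw [integral_eq_lintegral_of_nonneg_ae hnonneg hsm, lintegral_congr_ae hae, key,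
    ENNReal.toReal_ofReal (by positivity)]
end

section
/- For γ > 0, λ > 0, κ ≥ 0 and ν ∈ (0,1), let ρ = λ/(λ+κ) ∈ (0,1]; then for θ > 0 the Laplace transform of W(x) = 1/(λ+κ) + (ργ^ν/(λ+κ))∫₀ˣ e^{-γy} y^{ν-1} E_{ν,ν}(ργ^ν y^ν) dy equals 1/(θφ(θ)), where φ(θ) = κ + λ(1 - (γ/(γ+θ))^ν). -/
set_option maxHeartbeats 1000000

open Real MeasureTheory Set Filter

/-- The two-parameter Mittag-Leffler function. -/
noncomputable def mittagLeffler (α β x : ℝ) : ℝ :=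
  ∑' n : ℕ, x ^ n / Real.Gamma (n * α + β)

section Aux

lemma gamma_mono {x y : ℝ} (hx : 2 ≤ x) (hxy : x ≤ y) : Real.Gamma x ≤ Real.Gamma y := by
  rcases eq_or_lt_of_le hxy with rfl | h
  · exact le_refl _
  · exact (Real.Gamma_strictMonoOn_Ici hx (le_trans hx hxy) h).le

lemma ml_summable {ν : ℝ} (hν : 0 < ν) {t : ℝ} (ht : 0 ≤ t) :
    Summable (fun n : ℕ => t ^ n / Real.Gamma (n * ν + ν)) := by
  obtain ⟨K, hK⟩ : ∃ K : ℕ, 1 ≤ (K : ℝ) * ν := by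
    obtain ⟨K, hK⟩ := exists_nat_ge (1 / ν)
    exact ⟨K, by rw [div_le_iff₀ hν] at hK; linarith⟩
  have hK0 : K ≠ 0 := by
    rintro rfl; simp at hK; linarith
  obtain ⟨N, hN⟩ : ∃ N : ℕ, 2 * t ^ K + 2 ≤ (N : ℝ) * ν + ν := by
    obtain ⟨N, hN⟩ := exists_nat_ge ((2 * t ^ K + 2) / ν)
    refine ⟨N, ?_⟩
    rw [div_le_iff₀ hν] at hN
    nlinarith [hν.le]
  set u : ℕ → ℝ := fun n => t ^ n / Real.Gamma (n * ν + ν) with hu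
  have hGpos : ∀ n : ℕ, 0 < Real.Gamma ((n : ℝ) * ν + ν) := fun n =>
    Real.Gamma_pos_of_pos (by positivity)
  have hunn : ∀ n, 0 ≤ u n := fun n => div_nonneg (pow_nonneg ht n) (hGpos n).le
  -- key ratio
  have hratio : ∀ n : ℕ, N ≤ n → u (n + K) ≤ u n / 2 := by
    intro n hn
    have hz2 : 2 * t ^ K + 2 ≤ (n : ℝ) * ν + ν := by
      refine hN.trans ?_
      have : (N : ℝ) ≤ (n : ℝ) := Nat.cast_le.2 hn
      nlinarith [hν.le]
    set z : ℝ := (n : ℝ) * ν + ν with hz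
    have hz0 : 0 < z := by positivity
    have hzbig : 2 ≤ z := by nlinarith [pow_nonneg ht K]
    have hG1 : z * Real.Gamma z ≤ Real.Gamma (((n + K : ℕ) : ℝ) * ν + ν) := by
      rw [← Real.Gamma_add_one hz0.ne']
      refine gamma_mono (by linarith) ?_
      push_cast
      nlinarith
    have h1 : u (n + K) ≤ t ^ (n + K) / (z * Real.Gamma z) := by
      refine div_le_div_of_nonneg_left (pow_nonneg ht _) (by positivity) hG1
    refine h1.trans ?_
    rw [pow_add]
    have h2 : t ^ n * t ^ K / (z * Real.Gamma z) = (t ^ n / Real.Gamma z) * (t ^ K / z) := by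
      rw [div_mul_div_comm, mul_comm (Real.Gamma z) z]
    rw [h2]
    have h3 : t ^ K / z ≤ 1 / 2 := by
      rw [div_le_div_iff₀ hz0 (by norm_num)]
      nlinarith
    have h4 : 0 ≤ t ^ n / Real.Gamma z := div_nonneg (pow_nonneg ht n) (Real.Gamma_pos_of_pos hz0).le
    calc (t ^ n / Real.Gamma z) * (t ^ K / z) ≤ (t ^ n / Real.Gamma z) * (1 / 2) :=
          mul_le_mul_of_nonneg_left h3 h4
      _ = u n / 2 := by rw [hu]; ring
  -- bound by halving along K-steps
  set U : ℝ := ∑ i ∈ Finset.range K, u (N + i) with hU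
  have hUn : ∀ r < K, u (N + r) ≤ U :=
    fun r hr => Finset.single_le_sum (fun i _ => hunn (N + i)) (Finset.mem_range.2 hr)
  have hbound : ∀ n : ℕ, u (N + n) ≤ U * (1 / 2) ^ (n / K) := by
    intro n
    induction n using Nat.strong_induction_on with
    | _ n ih =>
      by_cases hnK : n < K
      · rw [Nat.div_eq_of_lt hnK, pow_zero, mul_one]
        exact hUn n hnK
      · push_neg at hnK
        obtain ⟨m, rfl⟩ : ∃ m, n = m + K := ⟨n - K, by omega⟩
        have h1 : u (N + (m + K)) ≤ u (N + m) / 2 := by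
          rw [← add_assoc]
          exact hratio (N + m) (Nat.le_add_right _ _)
        have h2 := ih m (by omega)
        have : (m + K) / K = m / K + 1 := Nat.add_div_right m (by omega)
        rw [this, pow_succ]
        calc u (N + (m + K)) ≤ u (N + m) / 2 := h1
          _ ≤ U * (1 / 2) ^ (m / K) / 2 := by linarith
          _ = U * ((1 / 2) ^ (m / K) * (1 / 2)) := by ring
  -- compare with geometric
  set q : ℝ := (1 / 2 : ℝ) ^ ((K : ℝ)⁻¹) with hq
  have hq0 : 0 < q := Real.rpow_pos_of_pos (by norm_num) _
  have hq1 : q < 1 := by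
    refine Real.rpow_lt_one (by norm_num) (by norm_num) ?_
    have : (0 : ℝ) < K := by positivity
    positivity
  have hqK : q ^ K = 1 / 2 := by
    rw [hq, ← Real.rpow_natCast ((1 / 2 : ℝ) ^ ((K : ℝ)⁻¹)) K, ← Real.rpow_mul (by norm_num),
      inv_mul_cancel₀ (by exact_mod_cast hK0 : (K : ℝ) ≠ 0), Real.rpow_one]
  have hhalf : ∀ j : ℕ, ((1 : ℝ) / 2) ^ j = q ^ (K * j) := by
    intro j; rw [pow_mul, hqK]
  have hgeo : Summable (fun n : ℕ => q ^ (n - K)) := by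
    rw [← summable_nat_add_iff K]
    have : (fun n : ℕ => q ^ (n + K - K)) = fun n : ℕ => q ^ n := by
      funext n; congr 1; omega
    rw [this]
    exact summable_geometric_of_lt_one hq0.le hq1
  rw [← summable_nat_add_iff N]
  refine Summable.of_nonneg_of_le (fun n => hunn (n + N)) (fun n => ?_) (hgeo.mul_left U)
  have h1 : u (n + N) ≤ U * (1 / 2) ^ (n / K) := by rw [add_comm]; exact hbound n
  refine h1.trans ?_
  have hU0 : 0 ≤ U := Finset.sum_nonneg fun i _ => hunn _
  refine mul_le_mul_of_nonneg_left ?_ hU0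
  rw [hhalf]
  refine pow_le_pow_of_le_one hq0.le hq1.le ?_
  have := Nat.div_add_mod n K
  have := Nat.mod_lt n (show 0 < K by omega)
  omega


lemma ml_nonneg {ν t : ℝ} (hν : 0 < ν) (ht : 0 ≤ t) : 0 ≤ mittagLeffler ν ν t :=
  tsum_nonneg fun n => div_nonneg (pow_nonneg ht n)
    (Real.Gamma_nonneg_of_nonneg (by positivity))

lemma integrableOn_rpow_exp {p r : ℝ} (hp : 0 < p) (hr : 0 < r) :
    IntegrableOn (fun t : ℝ => t ^ (p - 1) * Real.exp (-(r * t))) (Set.Ioi 0) := by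
  have h1 : IntegrableOn (fun t : ℝ => Real.exp (-t) * t ^ (p - 1)) (Set.Ioi (r * 0)) := by
    simpa using Real.GammaIntegral_convergent hp
  have h2 := (integrableOn_Ioi_comp_mul_left_iff
    (fun t : ℝ => Real.exp (-t) * t ^ (p - 1)) 0 hr).2 h1
  have h3 : IntegrableOn (fun x : ℝ => ((r : ℝ) ^ (p - 1))⁻¹ *
      (Real.exp (-(r * x)) * (r * x) ^ (p - 1))) (Set.Ioi 0) := h2.const_mul _
  refine (h3.congr_fun ?_ measurableSet_Ioi)
  intro x hx
  have hx0 : (0 : ℝ) < x := hx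
  have hrp : (0 : ℝ) < r ^ (p - 1) := Real.rpow_pos_of_pos hr _
  simp only []
  rw [Real.mul_rpow hr.le hx0.le]
  field_simp

lemma lint_term {p r c : ℝ} (hp : 0 < p) (hr : 0 < r) (hc : 0 ≤ c) :
    ∫⁻ y in Set.Ioi 0, ENNReal.ofReal (c * (y ^ (p - 1) * Real.exp (-(r * y)))) =
      ENNReal.ofReal (c * ((1 / r) ^ p * Real.Gamma p)) := by
  rw [← ofReal_integral_eq_lintegral_ofReal (((integrableOn_rpow_exp hp hr).const_mul c))
    ((ae_restrict_iff' measurableSet_Ioi).2 (ae_of_all _ fun x hx =>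
      mul_nonneg hc (mul_nonneg (Real.rpow_nonneg (le_of_lt hx) _) (Real.exp_nonneg _))))]
  rw [integral_const_mul, integral_rpow_mul_exp_neg_mul_Ioi hp hr]


/-- pointwise series expansion, in `ℝ≥0∞`. -/
lemma ml_ofReal_eq {ν a r y : ℝ} (hν : 0 < ν) (ha : 0 ≤ a) (hy : 0 < y) :
    ENNReal.ofReal (Real.exp (-(r * y)) * y ^ (ν - 1) * mittagLeffler ν ν (a * y ^ ν)) =
      ∑' n : ℕ, ENNReal.ofReal ((a ^ n / Real.Gamma (n * ν + ν)) *
        (y ^ (n * ν + ν - 1) * Real.exp (-(r * y)))) := by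
  have ht : 0 ≤ a * y ^ ν := mul_nonneg ha (Real.rpow_nonneg hy.le _)
  have hGpos : ∀ n : ℕ, 0 < Real.Gamma ((n : ℝ) * ν + ν) := fun n =>
    Real.Gamma_pos_of_pos (by positivity)
  have hterm : ∀ n : ℕ,
      Real.exp (-(r * y)) * y ^ (ν - 1) * ((a * y ^ ν) ^ n / Real.Gamma (n * ν + ν)) =
      (a ^ n / Real.Gamma (n * ν + ν)) * (y ^ ((n : ℝ) * ν + ν - 1) * Real.exp (-(r * y))) := by
    intro n
    have h1 : (a * y ^ ν) ^ n = a ^ n * y ^ ((ν : ℝ) * n) := by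
      rw [mul_pow, ← Real.rpow_natCast (y ^ ν) n, ← Real.rpow_mul hy.le]
    have h2 : y ^ (ν - 1) * y ^ ((ν : ℝ) * n) = y ^ ((n : ℝ) * ν + ν - 1) := by
      rw [← Real.rpow_add hy]
      ring_nf
    rw [h1]
    field_simp
    rw [show ν * ((n : ℝ) + 1) - 1 = (n : ℝ) * ν + ν - 1 by ring, ← h2]
    ring
  have hsum : Summable (fun n : ℕ =>
      Real.exp (-(r * y)) * y ^ (ν - 1) * ((a * y ^ ν) ^ n / Real.Gamma (n * ν + ν))) :=
    (ml_summable hν ht).mul_left _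
  calc ENNReal.ofReal (Real.exp (-(r * y)) * y ^ (ν - 1) * mittagLeffler ν ν (a * y ^ ν))
      = ENNReal.ofReal (∑' n : ℕ,
          Real.exp (-(r * y)) * y ^ (ν - 1) * ((a * y ^ ν) ^ n / Real.Gamma (n * ν + ν))) := by
        rw [mittagLeffler, ← tsum_mul_left]
    _ = ∑' n : ℕ, ENNReal.ofReal
          (Real.exp (-(r * y)) * y ^ (ν - 1) * ((a * y ^ ν) ^ n / Real.Gamma (n * ν + ν))) := by
        refine ENNReal.ofReal_tsum_of_nonneg (fun n => ?_) hsum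
        have := (hGpos n).le
        positivity
    _ = _ := by
        congr 1; funext n; rw [hterm n]

/-- Main lintegral computation. -/
lemma lintA {ν s a : ℝ} (hν : 0 < ν) (hs : 0 < s) (ha : 0 ≤ a) (hlt : a < s ^ ν) :
    ∫⁻ y in Set.Ioi 0, (∑' n : ℕ, ENNReal.ofReal ((a ^ n / Real.Gamma (n * ν + ν)) *
        (y ^ (n * ν + ν - 1) * Real.exp (-(s * y))))) =
      ENNReal.ofReal (1 / (s ^ ν - a)) := by
  have hGpos : ∀ n : ℕ, 0 < Real.Gamma ((n : ℝ) * ν + ν) := fun n =>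
    Real.Gamma_pos_of_pos (by positivity)
  have hmeas : ∀ n : ℕ, AEMeasurable (fun y : ℝ => ENNReal.ofReal
      ((a ^ n / Real.Gamma (n * ν + ν)) * (y ^ (n * ν + ν - 1) * Real.exp (-(s * y)))))
      (volume.restrict (Set.Ioi 0)) := by
    intro n
    refine (ENNReal.measurable_ofReal.comp ?_).aemeasurable
    fun_prop
  rw [lintegral_tsum hmeas]
  have hterm : ∀ n : ℕ,
      ∫⁻ y in Set.Ioi 0, ENNReal.ofReal ((a ^ n / Real.Gamma (n * ν + ν)) *
        (y ^ (n * ν + ν - 1) * Real.exp (-(s * y)))) =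
      ENNReal.ofReal (a ^ n * ((1 / s) ^ ν) ^ n * (1 / s) ^ ν) := by
    intro n
    have hp : (0 : ℝ) < (n : ℝ) * ν + ν := by positivity
    have hc : (0 : ℝ) ≤ a ^ n / Real.Gamma ((n : ℝ) * ν + ν) :=
      div_nonneg (pow_nonneg ha n) (hGpos n).le
    have h := lint_term (c := a ^ n / Real.Gamma ((n : ℝ) * ν + ν)) hp hs hc
    rw [show (n : ℝ) * ν + ν - 1 = ((n : ℝ) * ν + ν) - 1 by ring] at *
    rw [h]
    congr 1
    have h1 : (1 / s) ^ ((n : ℝ) * ν + ν) = ((1 / s) ^ ν) ^ n * (1 / s) ^ ν := by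
      rw [Real.rpow_add (by positivity), ← Real.rpow_natCast ((1 / s) ^ ν) n,
        ← Real.rpow_mul (by positivity)]
      ring_nf
    rw [h1]
    field_simp
  simp_rw [hterm]
  have hb : (0 : ℝ) ≤ a * (1 / s) ^ ν := by positivity
  have hrs : (1 / s : ℝ) ^ ν = (s ^ ν)⁻¹ := by
    rw [one_div, ← Real.inv_rpow hs.le]
  have hsν : (0 : ℝ) < s ^ ν := Real.rpow_pos_of_pos hs _
  have hr1 : a * (1 / s) ^ ν < 1 := by
    rw [hrs]
    rw [mul_inv_lt_iff₀ hsν]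
    simpa using hlt
  have hsum : Summable (fun n : ℕ => (a * (1 / s) ^ ν) ^ n * (1 / s) ^ ν) :=
    (summable_geometric_of_lt_one hb hr1).mul_right _
  calc ∑' n : ℕ, ENNReal.ofReal (a ^ n * ((1 / s) ^ ν) ^ n * (1 / s) ^ ν)
      = ∑' n : ℕ, ENNReal.ofReal ((a * (1 / s) ^ ν) ^ n * (1 / s) ^ ν) := by
        congr 1; funext n; rw [mul_pow]
    _ = ENNReal.ofReal (∑' n : ℕ, (a * (1 / s) ^ ν) ^ n * (1 / s) ^ ν) := by
        refine (ENNReal.ofReal_tsum_of_nonneg (fun n => ?_) hsum).symm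
        positivity
    _ = ENNReal.ofReal (1 / (s ^ ν - a)) := by
        congr 1
        rw [tsum_mul_right, tsum_geometric_of_lt_one hb hr1, hrs]
        have hne : s ^ ν - a ≠ 0 := ne_of_gt (by linarith)
        have h2 : (1 : ℝ) - a * (s ^ ν)⁻¹ = (s ^ ν - a) * (s ^ ν)⁻¹ := by
          field_simp
        rw [h2, mul_inv, inv_inv, one_div, mul_assoc, mul_inv_cancel₀ hsν.ne', mul_one]

lemma integral_exp_neg_mul_Ioi {θ : ℝ} (hθ : 0 < θ) (y : ℝ) :
    ∫ x in Set.Ioi y, Real.exp (-(θ * x)) = Real.exp (-(θ * y)) / θ := by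
  have hderiv : ∀ x ∈ Set.Ici y,
      HasDerivAt (fun x : ℝ => -(Real.exp (-(θ * x)) / θ)) (Real.exp (-(θ * x))) x := by
    intro x _
    have h1 : HasDerivAt (fun x : ℝ => -(θ * x)) (-θ) x := by
      have h := ((hasDerivAt_id x).const_mul θ).neg; rw [mul_one] at h; exact h
    have h2 := (Real.hasDerivAt_exp (-(θ * x))).comp x h1
    have h3 := (h2.div_const θ).neg
    exact h3.congr_deriv (by rw [mul_neg, neg_div, neg_neg, mul_div_assoc, div_self hθ.ne', mul_one])
  have hint : IntegrableOn (fun x : ℝ => Real.exp (-(θ * x))) (Set.Ioi y) := by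
    have := exp_neg_integrableOn_Ioi y hθ
    refine this.congr_fun (fun x _ => by simp only [neg_mul]) measurableSet_Ioi
  have htend : Tendsto (fun x : ℝ => -(Real.exp (-(θ * x)) / θ)) atTop (nhds 0) := by
    have h1 : Tendsto (fun x : ℝ => -(θ * x)) atTop atBot :=
      tendsto_id.const_mul_atTop_of_neg (neg_neg_iff_pos.2 hθ) |>.congr (fun x => by simp)
    have h2 : Tendsto (fun x : ℝ => Real.exp (-(θ * x))) atTop (nhds 0) :=
      Real.tendsto_exp_atBot.comp h1
    simpa using (h2.div_const θ).neg
  have := MeasureTheory.integral_Ioi_of_hasDerivAt_of_tendsto'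
    hderiv hint htend
  rw [this]
  ring

lemma lintegral_exp_neg_mul_Ici {θ : ℝ} (hθ : 0 < θ) (y : ℝ) :
    ∫⁻ x in Set.Ici y, ENNReal.ofReal (Real.exp (-(θ * x))) =
      ENNReal.ofReal (Real.exp (-(θ * y)) / θ) := by
  have hint : IntegrableOn (fun x : ℝ => Real.exp (-(θ * x))) (Set.Ici y) := by
    rw [integrableOn_Ici_iff_integrableOn_Ioi]
    have := exp_neg_integrableOn_Ioi y hθ
    refine this.congr_fun (fun x _ => by simp only [neg_mul]) measurableSet_Ioi
  rw [← ofReal_integral_eq_lintegral_ofReal hint (ae_of_all _ fun x => Real.exp_nonneg _)]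
  rw [MeasureTheory.integral_Ici_eq_integral_Ioi, integral_exp_neg_mul_Ioi hθ y]

end Aux


theorem scale_function_killed_compound_poisson_gamma_jumps
    (κ lam γ ν ρ : ℝ) (hκ : 0 ≤ κ) (hlam : 0 < lam) (hγ : 0 < γ)
    (hν : 0 < ν ∧ ν < 1) (hρ : ρ = lam / (lam + κ))
    (W φ : ℝ → ℝ)
    (hW : ∀ x, W x = 1 / (lam + κ) + (ρ * γ ^ ν / (lam + κ)) *
      ∫ y in (0 : ℝ)..x,
        Real.exp (-γ * y) * y ^ (ν - 1) * mittagLeffler ν ν (ρ * γ ^ ν * y ^ ν))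
    (hφ : ∀ θ : ℝ, 0 ≤ θ → φ θ = κ + lam * (1 - (γ / (γ + θ)) ^ ν)) :
    ∀ θ : ℝ, 0 < θ →
      ∫ x in Set.Ioi (0 : ℝ), Real.exp (-θ * x) * W x = 1 / (θ * φ θ) := by
  obtain ⟨hν1, hν2⟩ := hν
  intro θ hθ
  have hlk : 0 < lam + κ := by linarith
  have hρ0 : 0 < ρ := hρ ▸ div_pos hlam hlk
  have hρ1 : ρ ≤ 1 := by rw [hρ, div_le_one hlk]; linarith
  set c : ℝ := 1 / (lam + κ) with hc
  have hc0 : 0 < c := by positivity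
  set s : ℝ := γ + θ with hsdef
  have hs0 : 0 < s := by positivity
  set a : ℝ := ρ * γ ^ ν with hadef
  have hγν : 0 < γ ^ ν := Real.rpow_pos_of_pos hγ _
  have ha0 : 0 < a := mul_pos hρ0 hγν
  have hsν : 0 < s ^ ν := Real.rpow_pos_of_pos hs0 _
  have ha1 : a < s ^ ν := by
    have h1 : a ≤ γ ^ ν := by
      rw [hadef]
      nlinarith
    have h2 : γ ^ ν < s ^ ν := Real.rpow_lt_rpow hγ.le (by linarith) hν1
    linarith
  have hd : 0 < s ^ ν - a := by linarith
  -- the series-form density in ℝ≥0∞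
  set G : ℝ → ENNReal := fun y => ∑' n : ℕ, ENNReal.ofReal ((a ^ n / Real.Gamma (n * ν + ν)) *
    (y ^ (n * ν + ν - 1) * Real.exp (-(γ * y)))) with hGdef
  have hGmeas : Measurable G := by
    refine Measurable.ennreal_tsum fun n => ENNReal.measurable_ofReal.comp ?_
    fun_prop
  set g : ℝ → ℝ := fun y =>
    Real.exp (-γ * y) * y ^ (ν - 1) * mittagLeffler ν ν (a * y ^ ν) with hgdef
  have hgnn : ∀ y : ℝ, 0 < y → 0 ≤ g y := by
    intro y hy
    exact mul_nonneg (mul_nonneg (Real.exp_nonneg _) (Real.rpow_nonneg hy.le _))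
      (ml_nonneg hν1 (mul_nonneg ha0.le (Real.rpow_nonneg hy.le _)))
  have hGg : ∀ y : ℝ, 0 < y → G y = ENNReal.ofReal (g y) := by
    intro y hy
    rw [hGdef, hgdef]
    simp only [neg_mul]
    exact (ml_ofReal_eq hν1 ha0.le hy).symm
  -- Laplace transform of g
  have hGs : ∀ y : ℝ, ENNReal.ofReal (Real.exp (-(θ * y))) * G y =
      ∑' n : ℕ, ENNReal.ofReal ((a ^ n / Real.Gamma (n * ν + ν)) *
        (y ^ (n * ν + ν - 1) * Real.exp (-(s * y)))) := by
    intro y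
    rw [hGdef, ← ENNReal.tsum_mul_left]
    congr 1
    funext n
    rw [← ENNReal.ofReal_mul (Real.exp_nonneg _)]
    congr 1
    have hexp : Real.exp (-(θ * y)) * Real.exp (-(γ * y)) = Real.exp (-(s * y)) := by
      rw [← Real.exp_add, hsdef]
      ring_nf
    rw [← hexp]
    ring
  have hA : ∫⁻ y in Set.Ioi 0, ENNReal.ofReal (Real.exp (-(θ * y))) * G y =
      ENNReal.ofReal (1 / (s ^ ν - a)) := by
    simp_rw [hGs]
    exact lintA hν1 hs0 ha0.le ha1
  -- primitive of G
  set L : ℝ → ENNReal := fun x => ∫⁻ y, (Set.Ioc (0 : ℝ) x).indicator G y with hLdef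
  have hLmeas : Measurable L := by
    have hset : MeasurableSet {q : ℝ × ℝ | 0 < q.2 ∧ q.2 ≤ q.1} :=
      (measurableSet_lt measurable_const measurable_snd).inter
        (measurableSet_le measurable_snd measurable_fst)
    have heq : ∀ p : ℝ × ℝ, (Set.Ioc (0 : ℝ) p.1).indicator G p.2 =
        {q : ℝ × ℝ | 0 < q.2 ∧ q.2 ≤ q.1}.indicator (fun q => G q.2) p := by
      intro p
      simp [Set.indicator_apply, Set.mem_Ioc, Set.mem_setOf_eq]
    refine Measurable.lintegral_prod_right (f := fun x y => (Set.Ioc (0 : ℝ) x).indicator G y) ?_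
    have : (Function.uncurry fun x y => (Set.Ioc (0 : ℝ) x).indicator G y) =
        {q : ℝ × ℝ | 0 < q.2 ∧ q.2 ≤ q.1}.indicator (fun q => G q.2) := by
      funext p
      exact heq p
    rw [this]
    exact (hGmeas.comp measurable_snd).indicator hset
  have hLx : ∀ x : ℝ, L x = ∫⁻ y in Set.Ioc 0 x, G y := by
    intro x
    rw [hLdef]
    exact lintegral_indicator measurableSet_Ioc G
  have hLbound : ∀ x : ℝ, 0 < x →
      L x ≤ ENNReal.ofReal (Real.exp (θ * x)) * ENNReal.ofReal (1 / (s ^ ν - a)) := by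
    intro x hx
    rw [hLx]
    calc ∫⁻ y in Set.Ioc 0 x, G y
        = ∫⁻ y in Set.Ioc 0 x, ENNReal.ofReal (Real.exp (θ * x)) *
            (ENNReal.ofReal (Real.exp (-(θ * x))) * G y) := by
          refine lintegral_congr fun y => ?_
          rw [← mul_assoc, ← ENNReal.ofReal_mul (Real.exp_nonneg _), ← Real.exp_add]
          norm_num
      _ ≤ ∫⁻ y in Set.Ioc 0 x, ENNReal.ofReal (Real.exp (θ * x)) *
            (ENNReal.ofReal (Real.exp (-(θ * y))) * G y) := by
          refine lintegral_mono_ae ?_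
          refine (ae_restrict_iff' measurableSet_Ioc).2 (ae_of_all _ fun y hy => ?_)
          refine mul_le_mul_right (mul_le_mul_left (ENNReal.ofReal_le_ofReal ?_) _) _
          exact Real.exp_le_exp.2 (by nlinarith [hy.2])
      _ = ENNReal.ofReal (Real.exp (θ * x)) *
            ∫⁻ y in Set.Ioc 0 x, ENNReal.ofReal (Real.exp (-(θ * y))) * G y := by
          refine lintegral_const_mul _ ?_
          exact (ENNReal.measurable_ofReal.comp (by fun_prop)).mul hGmeas
      _ ≤ ENNReal.ofReal (Real.exp (θ * x)) *
            ∫⁻ y in Set.Ioi 0, ENNReal.ofReal (Real.exp (-(θ * y))) * G y := by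
          exact mul_le_mul_right (lintegral_mono_set Set.Ioc_subset_Ioi_self) _
      _ = _ := by rw [hA]
  have hLfin : ∀ x : ℝ, 0 < x → L x ≠ ⊤ := by
    intro x hx
    exact ((hLbound x hx).trans_lt
      (ENNReal.mul_lt_top ENNReal.ofReal_lt_top ENNReal.ofReal_lt_top)).ne
  -- the primitive in hW equals (L x).toReal
  have hFL : ∀ x : ℝ, 0 < x → (∫ y in (0 : ℝ)..x, g y) = (L x).toReal := by
    intro x hx
    rw [intervalIntegral.integral_of_le hx.le]
    have hnn : 0 ≤ᵐ[volume.restrict (Set.Ioc 0 x)] g :=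
      (ae_restrict_iff' measurableSet_Ioc).2 (ae_of_all _ fun y hy => hgnn y hy.1)
    have hmg : AEStronglyMeasurable g (volume.restrict (Set.Ioc 0 x)) := by
      refine (hGmeas.ennreal_toReal.aestronglyMeasurable).congr ?_
      refine (ae_restrict_iff' measurableSet_Ioc).2 (ae_of_all _ fun y hy => ?_)
      show (G y).toReal = g y
      rw [hGg y hy.1, ENNReal.toReal_ofReal (hgnn y hy.1)]
    rw [MeasureTheory.integral_eq_lintegral_of_nonneg_ae hnn hmg]
    congr 1
    rw [hLx]
    refine setLIntegral_congr_fun measurableSet_Ioc (fun y hy => ?_)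
    rw [hGg y hy.1]
  -- Tonelli / Fubini step
  have hTon : ∫⁻ x in Set.Ioi 0, ENNReal.ofReal (Real.exp (-(θ * x))) * L x =
      ENNReal.ofReal (1 / θ) * ENNReal.ofReal (1 / (s ^ ν - a)) := by
    have hswap : ∫⁻ x in Set.Ioi 0, ∫⁻ y,
        ENNReal.ofReal (Real.exp (-(θ * x))) * (Set.Ioc (0 : ℝ) x).indicator G y =
        ∫⁻ y, ∫⁻ x in Set.Ioi 0,
        ENNReal.ofReal (Real.exp (-(θ * x))) * (Set.Ioc (0 : ℝ) x).indicator G y := by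
      refine lintegral_lintegral_swap ?_
      have hset : MeasurableSet {q : ℝ × ℝ | 0 < q.2 ∧ q.2 ≤ q.1} :=
        (measurableSet_lt measurable_const measurable_snd).inter
          (measurableSet_le measurable_snd measurable_fst)
      refine Measurable.aemeasurable ?_
      have : (Function.uncurry fun x y =>
          ENNReal.ofReal (Real.exp (-(θ * x))) * (Set.Ioc (0 : ℝ) x).indicator G y) =
          fun p : ℝ × ℝ => ENNReal.ofReal (Real.exp (-(θ * p.1))) *
            {q : ℝ × ℝ | 0 < q.2 ∧ q.2 ≤ q.1}.indicator (fun q => G q.2) p := by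
        funext p
        simp [Function.uncurry, Set.indicator_apply, Set.mem_Ioc, Set.mem_setOf_eq]
      rw [this]
      refine Measurable.mul ?_ ((hGmeas.comp measurable_snd).indicator hset)
      exact Measurable.ennreal_ofReal (by fun_prop)
    have hinner : ∀ y : ℝ, (∫⁻ x in Set.Ioi 0,
        ENNReal.ofReal (Real.exp (-(θ * x))) * (Set.Ioc (0 : ℝ) x).indicator G y) =
        (Set.Ioi (0 : ℝ)).indicator
          (fun y => ENNReal.ofReal (Real.exp (-(θ * y)) / θ) * G y) y := by
      intro y
      by_cases hy : 0 < y
      · have h1 : ∀ x : ℝ, ENNReal.ofReal (Real.exp (-(θ * x))) *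
            (Set.Ioc (0 : ℝ) x).indicator G y =
            (Set.Ici y).indicator (fun x => ENNReal.ofReal (Real.exp (-(θ * x))) * G y) x := by
          intro x
          rw [Set.indicator_apply, Set.indicator_apply]
          by_cases hxy : y ≤ x
          · simp [Set.mem_Ioc, Set.mem_Ici, hy, hxy]
          · simp [Set.mem_Ioc, Set.mem_Ici, hy, hxy]
        simp_rw [h1]
        rw [Set.indicator_of_mem (by exact hy : y ∈ Set.Ioi 0)]
        rw [lintegral_indicator measurableSet_Ici, Measure.restrict_restrict measurableSet_Ici]
        have hsub : Set.Ici y ⊆ Set.Ioi (0 : ℝ) := fun x hx => lt_of_lt_of_le hy hx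
        rw [Set.inter_eq_left.2 hsub]
        rw [lintegral_mul_const _ (Measurable.ennreal_ofReal (by fun_prop))]
        rw [lintegral_exp_neg_mul_Ici hθ y]
      · have h1 : ∀ x : ℝ, ENNReal.ofReal (Real.exp (-(θ * x))) *
            (Set.Ioc (0 : ℝ) x).indicator G y = 0 := by
          intro x
          rw [Set.indicator_of_notMem (fun h => hy h.1), mul_zero]
        simp_rw [h1]
        simp [Set.indicator_apply, hy]
    calc ∫⁻ x in Set.Ioi 0, ENNReal.ofReal (Real.exp (-(θ * x))) * L x
        = ∫⁻ x in Set.Ioi 0, ∫⁻ y,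
            ENNReal.ofReal (Real.exp (-(θ * x))) * (Set.Ioc (0 : ℝ) x).indicator G y := by
          refine lintegral_congr fun x => ?_
          rw [hLdef]
          exact (lintegral_const_mul _ (hGmeas.indicator measurableSet_Ioc)).symm
      _ = ∫⁻ y, ∫⁻ x in Set.Ioi 0,
            ENNReal.ofReal (Real.exp (-(θ * x))) * (Set.Ioc (0 : ℝ) x).indicator G y := hswap
      _ = ∫⁻ y, (Set.Ioi (0 : ℝ)).indicator
            (fun y => ENNReal.ofReal (Real.exp (-(θ * y)) / θ) * G y) y := by
          exact lintegral_congr hinner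
      _ = ∫⁻ y in Set.Ioi 0, ENNReal.ofReal (Real.exp (-(θ * y)) / θ) * G y := by
          rw [lintegral_indicator measurableSet_Ioi]
      _ = ∫⁻ y in Set.Ioi 0, ENNReal.ofReal (1 / θ) *
            (ENNReal.ofReal (Real.exp (-(θ * y))) * G y) := by
          refine lintegral_congr fun y => ?_
          rw [← mul_assoc, ← ENNReal.ofReal_mul (by positivity), div_eq_mul_inv, one_div,
            mul_comm (Real.exp _) θ⁻¹]
      _ = ENNReal.ofReal (1 / θ) * ∫⁻ y in Set.Ioi 0,
            ENNReal.ofReal (Real.exp (-(θ * y))) * G y := by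
          refine lintegral_const_mul _ ?_
          exact (ENNReal.measurable_ofReal.comp (by fun_prop)).mul hGmeas
      _ = _ := by rw [hA]
  -- pointwise rewriting of the integrand
  have hWx : ∀ x : ℝ, 0 < x → Real.exp (-θ * x) * W x =
      c * Real.exp (-(θ * x)) + (c * a) * (Real.exp (-(θ * x)) * (L x).toReal) := by
    intro x hx
    rw [hW x, hFL x hx, neg_mul]
    have h : a / (lam + κ) = c * a := by rw [hc]; ring
    rw [h]; ring
  have hnnW : ∀ x ∈ Set.Ioi (0 : ℝ), 0 ≤ Real.exp (-θ * x) * W x := by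
    intro x hx
    rw [hWx x hx]
    have h1 := ENNReal.toReal_nonneg (a := L x)
    have h2 := Real.exp_nonneg (-(θ * x))
    exact add_nonneg (mul_nonneg hc0.le h2)
      (mul_nonneg (mul_nonneg hc0.le ha0.le) (mul_nonneg h2 h1))
  have haesm : AEStronglyMeasurable (fun x => Real.exp (-θ * x) * W x)
      (volume.restrict (Set.Ioi 0)) := by
    have hm : Measurable (fun x : ℝ =>
        c * Real.exp (-(θ * x)) + (c * a) * (Real.exp (-(θ * x)) * (L x).toReal)) := by
      refine Measurable.add ?_ ?_
      · exact (by fun_prop : Measurable fun x : ℝ => Real.exp (-(θ * x))).const_mul c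
      · exact ((by fun_prop : Measurable fun x : ℝ => Real.exp (-(θ * x))).mul
          hLmeas.ennreal_toReal).const_mul (c * a)
    refine hm.aestronglyMeasurable.congr ?_
    refine (ae_restrict_iff' measurableSet_Ioi).2 (ae_of_all _ fun x hx => ?_)
    exact (hWx x hx).symm
  rw [MeasureTheory.integral_eq_lintegral_of_nonneg_ae
    ((ae_restrict_iff' measurableSet_Ioi).2 (ae_of_all _ hnnW)) haesm]
  have hRnn : (0 : ℝ) ≤ c * (1 / θ) + (c * a) * ((1 / θ) * (1 / (s ^ ν - a))) := by
    have h1 : (0:ℝ) ≤ 1 / θ := by positivity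
    have h2 : (0:ℝ) ≤ 1 / (s ^ ν - a) := le_of_lt (by positivity)
    exact add_nonneg (mul_nonneg hc0.le h1)
      (mul_nonneg (mul_nonneg hc0.le ha0.le) (mul_nonneg h1 h2))
  have hmain : ∫⁻ x in Set.Ioi 0, ENNReal.ofReal (Real.exp (-θ * x) * W x) =
      ENNReal.ofReal (c * (1 / θ) + (c * a) * ((1 / θ) * (1 / (s ^ ν - a)))) := by
    have h1 : ∀ x ∈ Set.Ioi (0 : ℝ), ENNReal.ofReal (Real.exp (-θ * x) * W x) =
        ENNReal.ofReal (c * Real.exp (-(θ * x))) +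
          ENNReal.ofReal (c * a) * (ENNReal.ofReal (Real.exp (-(θ * x))) * L x) := by
      intro x hx
      rw [hWx x hx, ENNReal.ofReal_add (mul_nonneg hc0.le (Real.exp_nonneg _))
        (mul_nonneg (mul_nonneg hc0.le ha0.le)
          (mul_nonneg (Real.exp_nonneg _) ENNReal.toReal_nonneg))]
      congr 1
      rw [ENNReal.ofReal_mul (mul_nonneg hc0.le ha0.le),
        ENNReal.ofReal_mul (Real.exp_nonneg _), ENNReal.ofReal_toReal (hLfin x hx)]
    rw [setLIntegral_congr_fun measurableSet_Ioi h1]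
    rw [lintegral_add_left (Measurable.ennreal_ofReal (by fun_prop))]
    rw [lintegral_const_mul (f := fun x : ℝ => ENNReal.ofReal (Real.exp (-(θ * x))) * L x) _
      ((Measurable.ennreal_ofReal
      (by fun_prop : Measurable fun x : ℝ => Real.exp (-(θ * x)))).mul hLmeas)]
    rw [hTon]
    have h2 : ∫⁻ x in Set.Ioi 0, ENNReal.ofReal (c * Real.exp (-(θ * x))) =
        ENNReal.ofReal (c * (1 / θ)) := by
      have hint : IntegrableOn (fun x : ℝ => c * Real.exp (-(θ * x))) (Set.Ioi 0) := by
        refine Integrable.const_mul ?_ c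
        exact (exp_neg_integrableOn_Ioi 0 hθ).congr_fun (fun x _ => by simp only [neg_mul])
          measurableSet_Ioi
      rw [← ofReal_integral_eq_lintegral_ofReal hint
        (ae_of_all _ fun x => mul_nonneg hc0.le (Real.exp_nonneg _))]
      rw [integral_const_mul, integral_exp_neg_mul_Ioi hθ 0]
      norm_num
    rw [h2]
    rw [← ENNReal.ofReal_mul (by positivity : (0:ℝ) ≤ 1 / θ)]
    rw [← ENNReal.ofReal_mul (mul_nonneg hc0.le ha0.le)]
    rw [← ENNReal.ofReal_add (mul_nonneg hc0.le (by positivity))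
      (mul_nonneg (mul_nonneg hc0.le ha0.le) (by positivity))]
  rw [hmain, ENNReal.toReal_ofReal hRnn]
  -- final algebra
  rw [hφ θ hθ.le, ← hsdef]
  have hγs : (γ / s) ^ ν = γ ^ ν / s ^ ν := Real.div_rpow hγ.le hs0.le ν
  rw [hγs]
  have hγν2 : γ ^ ν < s ^ ν := Real.rpow_lt_rpow hγ.le (by linarith) hν1
  have hφpos : 0 < κ + lam * (1 - γ ^ ν / s ^ ν) := by
    have h3 : γ ^ ν / s ^ ν < 1 := (div_lt_one hsν).2 hγν2
    nlinarith
  have key : κ + lam * (1 - γ ^ ν / s ^ ν) = (lam + κ) * ((s ^ ν - a) / s ^ ν) := by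
    rw [hadef, hρ]
    field_simp
    ring
  rw [key, hc]
  have h1 : s ^ ν - a ≠ 0 := hd.ne'
  field_simp
  ring
end
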